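/- arXiv:2308.03773 — 3 statements merged into one kernel-verified Lean document; each statement's English description precedes it below -/
import Mathlib

section
/- Let ρ(β₁, β₃) = (2β₁β₃ + 2β₁ + 2β₃ - β₁² - β₃² - 1) / (1 - (β₁-β₃)²) on the interior of U = {(β₁,β₃) ∈ [0,1]² : β₁ + β₃ ≤ 1}. Then ρ is monotone with respect to the coordinatewise partial order: if (β₁,β₃) and (β₁',β₃') are in the interior of U with β₁ ≤ β₁' and β₃ ≤ β₃', then ρ(β₁,β₃) ≤ ρ(β₁',β₃'). -/
/-!
Since `2β₁β₃ - β₁² - β₃² = -(β₁ - β₃)²`, the numerator is the denominator minus `2(1 - β₁ - β₃)`, so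
`ρ = 1 - 2 · (1 - β₁ - β₃) / ((1 - β₁ + β₃)(1 + β₁ - β₃))`.
By the symmetry of `ρ` it suffices to show monotonicity in `β₁`, and there the subtracted fraction is
the positive, decreasing `(1 - β₁ - β₃)/(1 - β₁ + β₃) = 1 - 2β₃/(1 - β₁ + β₃)` divided by the positive,
increasing `1 + β₁ - β₃`.
-/

section Field

variable {K : Type*} [Field K]

def phiCoeff (a b : K) : K :=
  (2 * a * b + 2 * a + 2 * b - a ^ 2 - b ^ 2 - 1) / (1 - (a - b) ^ 2)

theorem phiCoeff_comm (a b : K) : phiCoeff a b = phiCoeff b a := by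
  unfold phiCoeff
  ring

theorem phiCoeff_eq_one_sub (a b : K) (hab : 1 - a + b ≠ 0) (hba : 1 + a - b ≠ 0) :
    phiCoeff a b = 1 - 2 * ((1 - a - b) / (1 - a + b) / (1 + a - b)) := by
  rw [phiCoeff, show 1 - (a - b) ^ 2 = (1 - a + b) * (1 + a - b) by ring]
  field_simp
  ring

end Field

section LinearOrderedField

variable {K : Type*} [Field K] [LinearOrder K] [IsStrictOrderedRing K]

theorem div_one_sub_add_antitone {a a' b : K} (hb : 0 ≤ b) (ha : a ≤ a') (hab : 0 < 1 - a' + b) :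
    (1 - a' - b) / (1 - a' + b) ≤ (1 - a - b) / (1 - a + b) := by
  have h_eq : ∀ x, 0 < 1 - x + b → (1 - x - b) / (1 - x + b) = 1 - 2 * b / (1 - x + b) := by
    intro x hx
    field_simp
    ring
  rw [h_eq a' hab, h_eq a (by linarith)]
  gcongr

theorem phiCoeff_mono_left {a a' b : K} (ha : 0 ≤ a) (hb : 0 ≤ b) (haa' : a ≤ a')
    (hsum : a' + b < 1) : phiCoeff a b ≤ phiCoeff a' b := by
  rw [phiCoeff_eq_one_sub a b (by linarith) (by linarith),
    phiCoeff_eq_one_sub a' b (by linarith) (by linarith)]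
  have h_left := div_one_sub_add_antitone hb haa' (by linarith)
  have h_num : 0 ≤ (1 - a' - b) / (1 - a' + b) := div_nonneg (by linarith) (by linarith)
  have h_frac : (1 - a' - b) / (1 - a' + b) / (1 + a' - b) ≤ (1 - a - b) / (1 - a + b) / (1 + a - b) :=
    div_le_div₀ (h_num.trans h_left) h_left (by linarith) (by linarith)
  linarith

end LinearOrderedField

theorem phi_coefficient_monotone_general
    (β₁ β₃ β₁' β₃' : ℝ)
    (h1 : 0 < β₁) (h3 : 0 < β₃)
    (hsum' : β₁' + β₃' < 1)
    (hle1 : β₁ ≤ β₁') (hle3 : β₃ ≤ β₃') :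
    (2 * β₁ * β₃ + 2 * β₁ + 2 * β₃ - β₁ ^ 2 - β₃ ^ 2 - 1) /
        (1 - (β₁ - β₃) ^ 2) ≤
      (2 * β₁' * β₃' + 2 * β₁' + 2 * β₃' - β₁' ^ 2 - β₃' ^ 2 - 1) /
        (1 - (β₁' - β₃') ^ 2) := by
  show phiCoeff β₁ β₃ ≤ phiCoeff β₁' β₃'
  calc phiCoeff β₁ β₃ ≤ phiCoeff β₁' β₃ :=
        phiCoeff_mono_left h1.le h3.le hle1 (by linarith)
    _ = phiCoeff β₃ β₁' := phiCoeff_comm _ _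
    _ ≤ phiCoeff β₃' β₁' := phiCoeff_mono_left h3.le (h1.le.trans hle1) hle3 (by linarith)
    _ = phiCoeff β₁' β₃' := phiCoeff_comm _ _

theorem phi_coefficient_monotone
    (β₁ β₃ β₁' β₃' : ℝ)
    (h1 : 0 < β₁) (h3 : 0 < β₃) (hsum : β₁ + β₃ < 1)
    (h1' : 0 < β₁') (h3' : 0 < β₃') (hsum' : β₁' + β₃' < 1)
    (hle1 : β₁ ≤ β₁') (hle3 : β₃ ≤ β₃') :
    (2 * β₁ * β₃ + 2 * β₁ + 2 * β₃ - β₁ ^ 2 - β₃ ^ 2 - 1) /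
        (1 - (β₁ - β₃) ^ 2) ≤
      (2 * β₁' * β₃' + 2 * β₁' + 2 * β₃' - β₁' ^ 2 - β₃' ^ 2 - 1) /
        (1 - (β₁' - β₃') ^ 2) :=
  phi_coefficient_monotone_general β₁ β₃ β₁' β₃' h1 h3 hsum' hle1 hle3
end

section
/- For (β₁,β₃) in the interior of U = {(x,y) ∈ [0,1]² : x + y ≤ 1}, the numerator of ∂ρ/∂β₁, namely 4(β₁+1)β₃ + 2(β₁-1)² - 6β₃², is nonnegative. -/
/- As a function of β₃ the numerator is a concave quadratic with value 2(1 - β₁)² at β₃ = 0 and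
8β₁(1 - β₁) at β₃ = 1 - β₁; interpolating between these endpoints gives the certificate
2(1 - β₁)(1 - β₁ - β₃) + 8β₁β₃ + 6β₃(1 - β₁ - β₃), a sum of positive products. -/
theorem phi_deriv_numerator_nonneg
    (β₁ β₃ : ℝ) (h1 : 0 < β₁) (h3 : 0 < β₃) (hsum : β₁ + β₃ < 1) :
    0 ≤ 4 * (β₁ + 1) * β₃ + 2 * (β₁ - 1) ^ 2 - 6 * β₃ ^ 2 := by
  have hgap : 0 < 1 - β₁ - β₃ := by linarith
  have hcomp : 0 < 1 - β₁ := by linarith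
  linear_combination 2 * mul_pos hcomp hgap + 8 * mul_pos h1 h3 + 6 * mul_pos h3 hgap
end

section
/- Let X be a binomially distributed random variable with parameters n and p ∈ (0,1), let k be a natural number with 0 < k/n < p. Then Pr(X ≤ k) ≤ exp(-n · D(k/n ‖ p)), where D(a‖p) = a·log(a/p) + (1-a)·log((1-a)/(1-p)) is the Kullback–Leibler divergence between Bernoulli(a) and Bernoulli(p). -/
/-!
Chernoff's method: for `0 ≤ t ≤ 1` every term `m ≤ k` of the lower tail satisfies `t ^ k ≤ t ^ m`,
so `t ^ k * P(X ≤ k)` is at most the full binomial sum `(t p + 1 - p) ^ n`. The choice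
`t = a (1 - p) / (p (1 - a))` with `a = k / n` optimises this bound, and the optimum is exactly
`(p / a) ^ k ((1 - p) / (1 - a)) ^ (n - k) = exp (-n D(a ‖ p))`.
-/

open MeasureTheory Real

/-- Kullback–Leibler divergence between Bernoulli(a) and Bernoulli(p). -/
noncomputable def klBern (a p : ℝ) : ℝ :=
  a * Real.log (a / p) + (1 - a) * Real.log ((1 - a) / (1 - p))

lemma toReal_measure_le_eq_sum {Ω : Type*} [MeasurableSpace Ω] (μ : Measure Ω) [IsFiniteMeasure μ]
    {X : Ω → ℕ} (hX : Measurable X) (k : ℕ) :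
    (μ {ω | X ω ≤ k}).toReal = ∑ m ∈ Finset.range (k + 1), (μ {ω | X ω = m}).toReal := by
  have hunion : {ω | X ω ≤ k} = ⋃ m ∈ Finset.range (k + 1), {ω | X ω = m} := by
    ext ω
    simp
  simp only [← measureReal_def]
  rw [hunion, measureReal_biUnion_finset]
  · intro i _ j _ hij
    exact Set.disjoint_left.mpr fun ω hi hj => hij (hi.symm.trans hj)
  · exact fun m _ => hX (measurableSet_singleton m)

lemma pow_mul_sum_range_choose_le {t x y : ℝ} (ht0 : 0 ≤ t) (ht1 : t ≤ 1) (hx : 0 ≤ x)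
    (hy : 0 ≤ y) {k n : ℕ} (hkn : k ≤ n) :
    t ^ k * ∑ m ∈ Finset.range (k + 1), (n.choose m : ℝ) * x ^ m * y ^ (n - m) ≤
      (t * x + y) ^ n := by
  rw [Finset.mul_sum, add_pow]
  calc ∑ m ∈ Finset.range (k + 1), t ^ k * ((n.choose m : ℝ) * x ^ m * y ^ (n - m))
      ≤ ∑ m ∈ Finset.range (k + 1), (t * x) ^ m * y ^ (n - m) * n.choose m := by
        refine Finset.sum_le_sum fun m hm => ?_
        calc t ^ k * ((n.choose m : ℝ) * x ^ m * y ^ (n - m))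
            ≤ t ^ m * ((n.choose m : ℝ) * x ^ m * y ^ (n - m)) := by
              refine mul_le_mul_of_nonneg_right ?_ (by positivity)
              exact pow_le_pow_of_le_one ht0 ht1 (Finset.mem_range_succ_iff.mp hm)
          _ = (t * x) ^ m * y ^ (n - m) * n.choose m := by ring
    _ ≤ ∑ m ∈ Finset.range (n + 1), (t * x) ^ m * y ^ (n - m) * n.choose m :=
        Finset.sum_le_sum_of_subset_of_nonneg (Finset.range_subset_range.mpr (by omega))
          fun m _ _ => by positivity

lemma sum_range_choose_le_chernoff {a p : ℝ} (ha0 : 0 < a) (hap : a ≤ p) (hp1 : p < 1)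
    {k n : ℕ} (hkn : k ≤ n) :
    ∑ m ∈ Finset.range (k + 1), (n.choose m : ℝ) * p ^ m * (1 - p) ^ (n - m) ≤
      (p / a) ^ k * ((1 - p) / (1 - a)) ^ (n - k) := by
  have hp0 : 0 < p := ha0.trans_le hap
  have hq0 : 0 < 1 - p := by linarith
  have hb0 : 0 < 1 - a := by linarith
  set t := a * (1 - p) / (p * (1 - a)) with ht
  have ht0 : 0 < t := by positivity
  have ht1 : t ≤ 1 := by
    rw [div_le_one (by positivity)]
    nlinarith
  have htp : t * p + (1 - p) = (1 - p) / (1 - a) := by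
    rw [ht]
    field_simp
    ring
  have hpt : p / a * t = (1 - p) / (1 - a) := by
    rw [ht]
    field_simp
  refine le_of_mul_le_mul_left ?_ (pow_pos ht0 k)
  calc t ^ k * ∑ m ∈ Finset.range (k + 1), (n.choose m : ℝ) * p ^ m * (1 - p) ^ (n - m)
      ≤ ((1 - p) / (1 - a)) ^ n := by
        rw [← htp]
        exact pow_mul_sum_range_choose_le ht0.le ht1 hp0.le hq0.le hkn
    _ = t ^ k * ((p / a) ^ k * ((1 - p) / (1 - a)) ^ (n - k)) := by
        rw [← mul_assoc, ← mul_pow, mul_comm t, hpt, ← pow_add, Nat.add_sub_cancel' hkn]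

lemma exp_neg_mul_klBern {a p : ℝ} (ha0 : 0 < a) (ha1 : a < 1) (hp0 : 0 < p) (hp1 : p < 1)
    {k n : ℕ} (hkn : k ≤ n) (hk : n * a = k) :
    exp (-n * klBern a p) = (p / a) ^ k * ((1 - p) / (1 - a)) ^ (n - k) := by
  have hnk : ((n - k : ℕ) : ℝ) = n * (1 - a) := by
    rw [Nat.cast_sub hkn, ← hk]
    ring
  have hexponent : -n * klBern a p =
      k * log (p / a) + ((n - k : ℕ) : ℝ) * log ((1 - p) / (1 - a)) := by
    rw [hnk, ← hk, ← inv_div a, ← inv_div (1 - a), log_inv, log_inv, klBern]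
    ring
  rw [hexponent, exp_add, exp_nat_mul, exp_nat_mul, exp_log (by positivity),
    exp_log (div_pos (by linarith) (by linarith))]

theorem binomial_lower_tail_KL
    {Ω : Type*} [MeasurableSpace Ω] (μ : Measure Ω) [IsProbabilityMeasure μ]
    (X : Ω → ℕ) (hX : Measurable X) (n : ℕ) (p : ℝ) (hp : p ∈ Set.Ioo (0:ℝ) 1)
    (hbin : ∀ m : ℕ, (μ {ω | X ω = m}).toReal =
      (n.choose m : ℝ) * p ^ m * (1 - p) ^ (n - m))
    (k : ℕ) (hk0 : 0 < (k : ℝ) / n) (hkp : (k : ℝ) / n < p) :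
    (μ {ω | X ω ≤ k}).toReal ≤ Real.exp (-(n : ℝ) * klBern ((k : ℝ) / n) p) := by
  obtain ⟨hp0, hp1⟩ := hp
  have hn : (0 : ℝ) < n := Nat.cast_pos.mpr (Nat.pos_of_ne_zero fun h => by simp [h] at hk0)
  have hk : (n : ℝ) * (k / n) = k := mul_div_cancel₀ _ hn.ne'
  have hkn : k ≤ n := by
    have : (k : ℝ) < n := (div_lt_one hn).mp (hkp.trans hp1)
    exact_mod_cast this.le
  rw [toReal_measure_le_eq_sum μ hX, Finset.sum_congr rfl fun m _ => hbin m,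
    exp_neg_mul_klBern hk0 (hkp.trans hp1) hp0 hp1 hkn hk]
  exact sum_range_choose_le_chernoff hk0 hkp.le hp1 hkn
end
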